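/- (Thermodynamic uncertainty relation.) Let ψ be twice continuously differentiable and convex, and let η : ℝ → E satisfy Newton's law η̇(t) = −λ(η(t) − η_q). For τ > 0 define the squared Riemannian speed Q(t) := ⟪η̇(t), H(η(t)) η̇(t)⟫ ≥ 0 and the Riemannian length L := ∫₀^τ √(Q(t)) dt. Then the dissipated availability satisfies F(η(0)) − F(η(τ)) = (1/λ) ∫₀^τ Q(t) dt ≥ L² / (λ τ). -/

import Mathlib

/-!
Along a Newtonian relaxation `η̇ = -λ (η - η_q)` the displacement to the target is
`η_q - η = η̇ / λ`, so differentiating the Bregman divergence `F(η(t))` leaves only the Hessian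
term `-⟪H η̇, η_q - η⟫ = -Q / λ`; integrating gives the dissipation identity. Convexity makes
`Q` nonnegative (the slope of `ψ` along any line is monotone), and Cauchy–Schwarz on `[0, τ]`
gives `L² = (∫ √Q)² ≤ τ ∫ Q`.
-/

open scoped RealInnerProductSpace

section

variable {E : Type*} [NormedAddCommGroup E] [InnerProductSpace ℝ E] [CompleteSpace E]

noncomputable def bregmanDiv (ψ : E → ℝ) (p x : E) : ℝ :=
  ψ p - ψ x - ⟪gradient ψ x, p - x⟫

theorem ConvexOn.inner_fderiv_gradient_self_nonneg {ψ : E → ℝ} (hconv : ConvexOn ℝ Set.univ ψ)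
    (hψ : Differentiable ℝ ψ) {x : E} (hG : DifferentiableAt ℝ (gradient ψ) x) (v : E) :
    0 ≤ ⟪fderiv ℝ (gradient ψ) x v, v⟫ := by
  have hline : ∀ s : ℝ, HasDerivAt (fun s : ℝ => x + s • v) v s := fun s => by
    simpa using ((hasDerivAt_id s).smul_const v).const_add x
  have hslope : ∀ s : ℝ, HasDerivAt (fun s => ψ (x + s • v)) ⟪gradient ψ (x + s • v), v⟫ s :=
    fun s => (hψ _).hasGradientAt.hasFDerivAt.comp_hasDerivAt s (hline s)
  have hrestrict : ConvexOn ℝ Set.univ fun s : ℝ => ψ (x + s • v) := by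
    have := hconv.comp_affineMap (AffineMap.lineMap x (x + v))
    simpa [Function.comp_def, AffineMap.lineMap_apply_module', add_comm] using this
  have hmono : Monotone fun s : ℝ => ⟪gradient ψ (x + s • v), v⟫ := by
    have := hrestrict.monotoneOn_deriv fun s _ => (hslope s).differentiableAt
    rwa [monotoneOn_univ, funext fun s => (hslope s).deriv] at this
  have hhess : HasDerivAt (fun s : ℝ => ⟪gradient ψ (x + s • v), v⟫)
      ⟪fderiv ℝ (gradient ψ) x v, v⟫ 0 := by
    simpa using (hG.hasFDerivAt.comp_hasDerivAt_of_eq (0 : ℝ) (hline 0) (by simp)).inner ℝ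
      (hasDerivAt_const (0 : ℝ) v)
  exact hhess.nonneg_of_monotone hmono

theorem HasDerivAt.bregmanDiv_comp {ψ : E → ℝ} {p : E} {γ : ℝ → E} {γ' : E} {t : ℝ}
    (hψ : DifferentiableAt ℝ ψ (γ t)) (hG : DifferentiableAt ℝ (gradient ψ) (γ t))
    (hγ : HasDerivAt γ γ' t) :
    HasDerivAt (fun s => bregmanDiv ψ p (γ s)) (-⟪fderiv ℝ (gradient ψ) (γ t) γ', p - γ t⟫) t := by
  have hψγ : HasDerivAt (fun s => ψ (γ s)) ⟪gradient ψ (γ t), γ'⟫ t :=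
    hψ.hasGradientAt.hasFDerivAt.comp_hasDerivAt t hγ
  have hpair := (hG.hasFDerivAt.comp_hasDerivAt t hγ).inner ℝ (hγ.const_sub p)
  refine (((hasDerivAt_const t (ψ p)).sub hψγ).sub hpair).congr_deriv ?_
  simp only [Function.comp_apply, inner_neg_right]
  ring

theorem HasDerivAt.bregmanDiv_comp_of_newton {ψ : E → ℝ} {p : E} {γ : ℝ → E} {γ' : E} {t lam : ℝ}
    (hlam : lam ≠ 0) (hψ : DifferentiableAt ℝ ψ (γ t))
    (hG : DifferentiableAt ℝ (gradient ψ) (γ t)) (hγ : HasDerivAt γ γ' t)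
    (hnewton : γ' = (-lam) • (γ t - p)) :
    HasDerivAt (fun s => bregmanDiv ψ p (γ s))
      (-(1 / lam * ⟪γ', fderiv ℝ (gradient ψ) (γ t) γ'⟫)) t := by
  have hdisp : p - γ t = (1 / lam) • γ' := by
    rw [hnewton, smul_smul, one_div_mul_eq_div, neg_div, div_self hlam, neg_smul, one_smul,
      neg_sub]
  refine (hγ.bregmanDiv_comp hψ hG).congr_deriv ?_
  rw [hdisp, real_inner_smul_right, real_inner_comm]

theorem intervalIntegral.sq_integral_le_mul_integral_sq {f : ℝ → ℝ} {a b : ℝ} (hab : a ≤ b)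
    (hf : IntervalIntegrable f MeasureTheory.volume a b)
    (hf2 : IntervalIntegrable (fun t => f t ^ 2) MeasureTheory.volume a b) :
    (∫ t in a..b, f t) ^ 2 ≤ (b - a) * ∫ t in a..b, f t ^ 2 := by
  rcases hab.eq_or_lt with rfl | hab
  · simp
  set I := ∫ t in a..b, f t
  -- the integrand is the deviation of `f` from its mean, scaled by `b - a`
  have hnonneg : 0 ≤ ∫ t in a..b, (f t * (b - a) - I) ^ 2 :=
    intervalIntegral.integral_nonneg hab.le fun t _ => sq_nonneg _
  have hexpand : ∫ t in a..b, (f t * (b - a) - I) ^ 2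
      = (b - a) * ((b - a) * ∫ t in a..b, f t ^ 2) - (b - a) * I ^ 2 := by
    have : ∀ t, (f t * (b - a) - I) ^ 2 = (b - a) ^ 2 * f t ^ 2 - 2 * (b - a) * I * f t + I ^ 2 :=
      fun t => by ring
    simp only [this]
    rw [intervalIntegral.integral_add ((hf2.const_mul _).sub (hf.const_mul _))
        intervalIntegrable_const, intervalIntegral.integral_sub (hf2.const_mul _) (hf.const_mul _),
      intervalIntegral.integral_const_mul, intervalIntegral.integral_const_mul,
      intervalIntegral.integral_const, smul_eq_mul]
    ring
  nlinarith

end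

/-- **Thermodynamic uncertainty relation.** Along a Newtonian relaxation of a convex
`C²` potential, the dissipated availability over `[0, τ]` equals `(1/λ) ∫₀^τ Q` where
`Q` is the squared Riemannian speed, and is bounded below by `L²/(λτ)` where `L` is the
Riemannian length of the path. -/
theorem thermodynamic_uncertainty_relation
    (n : ℕ) (ψ : EuclideanSpace ℝ (Fin n) → ℝ) (hψ : ContDiff ℝ 2 ψ)
    (hconv : ConvexOn ℝ Set.univ ψ)
    (ηq : EuclideanSpace ℝ (Fin n)) (lam : ℝ) (hlam : 0 < lam)
    (H : EuclideanSpace ℝ (Fin n) →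
      EuclideanSpace ℝ (Fin n) →L[ℝ] EuclideanSpace ℝ (Fin n))
    (hH : ∀ η, H η = fderiv ℝ (gradient ψ) η)
    (F : EuclideanSpace ℝ (Fin n) → ℝ)
    (hF : ∀ η, F η = ψ ηq - ψ η - ⟪gradient ψ η, ηq - η⟫)
    (η : ℝ → EuclideanSpace ℝ (Fin n)) (hη : Differentiable ℝ η)
    (hnewton : ∀ t, deriv η t = (-lam) • (η t - ηq))
    (τ : ℝ) (hτ : 0 < τ)
    (Q : ℝ → ℝ) (hQ : ∀ t, Q t = ⟪deriv η t, H (η t) (deriv η t)⟫)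
    (L : ℝ) (hL : L = ∫ t in (0:ℝ)..τ, Real.sqrt (Q t)) :
    (∀ t, 0 ≤ Q t) ∧
    F (η 0) - F (η τ) = (1 / lam) * ∫ t in (0:ℝ)..τ, Q t ∧
    L ^ 2 / (lam * τ) ≤ F (η 0) - F (η τ) := by
  have hG : ContDiff ℝ 1 (gradient ψ) :=
    (InnerProductSpace.toDual ℝ _).symm.contDiff.comp (hψ.fderiv_right (by norm_num))
  have hψd : Differentiable ℝ ψ := hψ.differentiable two_ne_zero
  have hGd : Differentiable ℝ (gradient ψ) := hG.differentiable one_ne_zero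
  have hQ_cont : Continuous Q := by
    have hη'_cont : Continuous (deriv η) := by
      rw [funext hnewton]; exact (hη.continuous.sub continuous_const).const_smul (-lam)
    simp only [funext hQ, hH]
    exact hη'_cont.inner (((hG.continuous_fderiv one_ne_zero).comp hη.continuous).clm_apply
      hη'_cont)
  have hQ_nonneg : ∀ t, 0 ≤ Q t := fun t => by
    rw [hQ, hH, real_inner_comm]
    exact hconv.inner_fderiv_gradient_self_nonneg hψd (hGd _) _
  have hdecay : ∀ t, HasDerivAt (fun s => F (η s)) (-(1 / lam * Q t)) t := fun t => by
    simpa only [funext hF, bregmanDiv, hQ, hH] using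
      (hη t).hasDerivAt.bregmanDiv_comp_of_newton hlam.ne' (hψd _) (hGd _) (hnewton t)
  have hdissipation : F (η 0) - F (η τ) = (1 / lam) * ∫ t in (0:ℝ)..τ, Q t := by
    rw [← neg_sub, ← intervalIntegral.integral_eq_sub_of_hasDerivAt (fun t _ => hdecay t)
      ((hQ_cont.intervalIntegrable 0 τ).const_mul _).neg, intervalIntegral.integral_neg,
      intervalIntegral.integral_const_mul, neg_neg]
  have hCS : L ^ 2 ≤ τ * ∫ t in (0:ℝ)..τ, Q t := by
    simpa only [← hL, sub_zero, Real.sq_sqrt (hQ_nonneg _)] using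
      intervalIntegral.sq_integral_le_mul_integral_sq hτ.le (hQ_cont.sqrt.intervalIntegrable 0 τ)
        (by simpa only [Real.sq_sqrt (hQ_nonneg _)] using hQ_cont.intervalIntegrable 0 τ)
  refine ⟨hQ_nonneg, hdissipation, ?_⟩
  rw [hdissipation, div_le_iff₀ (by positivity)]
  calc L ^ 2 ≤ τ * ∫ t in (0:ℝ)..τ, Q t := hCS
    _ = 1 / lam * (∫ t in (0:ℝ)..τ, Q t) * (lam * τ) := by field_simp
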